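/- Let α ∈ (0,1/2) be irrational and let k ≥ 3 be an integer. Then B_α(k) ≡ B_α(k−2) + ε (mod 2), where ε = 1 if k is even and {kα} < 2α, and ε = 0 otherwise. -/

import Mathlib

/-- `B α k` counts the integers `q` with `1 ≤ q < k` such that `{qα} < {kα}`. -/
noncomputable def B (α : ℝ) (k : ℕ) : ℕ :=
  ((Finset.Ico 1 k).filter (fun q : ℕ => Int.fract ((q : ℝ) * α) < Int.fract ((k : ℝ) * α))).card

/-!
The map `q ↦ k - q` is an involution of `{q ∈ [1, k) | {qα} < {kα}}`, since there
`{(k - q)α} = {kα} - {qα}`. Hence `B α k` has the parity of its number of fixed points: none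
for odd `k`, while for `k = 2m` the only candidate `m` counts iff `{mα} < {2mα}`, i.e. iff
`{mα} < 1/2`. Passing from `m - 1` to `m` moves `{mα}` by `α`, and this crosses `1/2` (in either
direction) exactly when `{2mα} < 2α`.
-/

open Finset Int

theorem Finset.cast_card_eq_card_fixed_zmod_two {ι : Type*} [DecidableEq ι] (s : Finset ι)
    (f : ι → ι) (hmem : ∀ a ∈ s, f a ∈ s) (hinv : ∀ a ∈ s, f (f a) = a) :
    (#s : ZMod 2) = #{a ∈ s | f a = a} := by
  have hfree : (#{a ∈ s | f a ≠ a} : ZMod 2) = 0 := by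
    rw [cast_card]
    refine sum_involution (fun a _ => f a) (fun _ _ => by decide)
      (fun a ha _ => (mem_filter.1 ha).2) (fun a ha => ?_) (fun a ha => hinv a (mem_filter.1 ha).1)
    obtain ⟨has, hfix⟩ := mem_filter.1 ha
    exact mem_filter.2 ⟨hmem a has, by rw [hinv a has]; exact Ne.symm hfix⟩
  rw [← card_filter_add_card_filter_not (fun a => f a = a), Nat.cast_add, hfree, add_zero]

section FloorRing

variable {R : Type*} [Ring R] [LinearOrder R] [FloorRing R]

theorem Int.fract_sub_of_fract_le [IsStrictOrderedRing R] {x y : R} (h : fract y ≤ fract x) :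
    fract (x - y) = fract x - fract y :=
  fract_eq_iff.2 ⟨sub_nonneg.2 h, (sub_le_self _ (fract_nonneg y)).trans_lt (fract_lt_one x),
    ⌊x⌋ - ⌊y⌋, by rw [← self_sub_floor x, ← self_sub_floor y]; push_cast; abel⟩

theorem Int.fract_eq_sub_of_le_of_lt {y : R} {n : ℤ} (h₁ : n ≤ y) (h₂ : y < n + 1) :
    fract y = y - n := by
  rw [← self_sub_floor, floor_eq_iff.2 ⟨h₁, h₂⟩]

end FloorRing

section FloorField

variable {K : Type*} [Field K] [LinearOrder K] [IsStrictOrderedRing K] [FloorRing K]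

theorem Int.fract_lt_fract_two_mul_iff {x : K} (hx : fract x ≠ 0) :
    fract x < fract (2 * x) ↔ fract x < 1 / 2 := by
  have hpos : 0 < fract x := (fract_nonneg x).lt_of_ne' hx
  have hlt := fract_lt_one x
  have h2x : 2 * x = 2 * fract x + (2 * ⌊x⌋ : ℤ) := by
    rw [← self_sub_floor x]; push_cast; ring
  rw [h2x, fract_add_intCast]
  rcases lt_or_ge (fract x) (1 / 2) with h | h
  · rw [fract_eq_sub_of_le_of_lt (y := 2 * fract x) (n := 0) (by push_cast; linarith)
      (by push_cast; linarith)]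
    push_cast; constructor <;> intro <;> linarith
  · rw [fract_eq_sub_of_le_of_lt (y := 2 * fract x) (n := 1) (by push_cast; linarith)
      (by push_cast; linarith)]
    push_cast; constructor <;> intro <;> linarith

theorem Int.fract_two_mul_add_lt_iff {x a : K} (ha₀ : 0 ≤ a) (ha : a ≤ 1 / 2) :
    fract (2 * (x + a)) < 2 * a ↔ (fract x < 1 / 2 ↔ ¬ fract (x + a) < 1 / 2) := by
  have hshift : x + a = (fract x + a) + ⌊x⌋ := by rw [← self_sub_floor x]; ring
  have hshift2 : 2 * (x + a) = 2 * (fract x + a) + (2 * ⌊x⌋ : ℤ) := by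
    rw [hshift]; push_cast; ring
  rw [hshift2, fract_add_intCast, hshift, fract_add_intCast]
  have ht₀ := fract_nonneg x
  have ht₁ := fract_lt_one x
  generalize fract x = t at *
  rcases lt_or_ge (t + a) (1 / 2) with h | h
  · rw [fract_eq_sub_of_le_of_lt (y := 2 * (t + a)) (n := 0) (by push_cast; linarith)
      (by push_cast; linarith), fract_eq_sub_of_le_of_lt (y := t + a) (n := 0)
      (by push_cast; linarith) (by push_cast; linarith)]
    push_cast
    grind
  rcases lt_or_ge (t + a) 1 with h' | h'
  · rw [fract_eq_sub_of_le_of_lt (y := 2 * (t + a)) (n := 1) (by push_cast; linarith)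
      (by push_cast; linarith), fract_eq_sub_of_le_of_lt (y := t + a) (n := 0)
      (by push_cast; linarith) (by push_cast; linarith)]
    push_cast
    grind
  · rw [fract_eq_sub_of_le_of_lt (y := 2 * (t + a)) (n := 2) (by push_cast; linarith)
      (by push_cast; linarith), fract_eq_sub_of_le_of_lt (y := t + a) (n := 1)
      (by push_cast; linarith) (by push_cast; linarith)]
    push_cast
    grind

end FloorField

theorem Irrational.fract_natCast_mul_pos {α : ℝ} (hα : Irrational α) {n : ℕ} (hn : n ≠ 0) :
    0 < fract (n * α) :=
  fract_pos.2 ((hα.natCast_mul hn).ne_int _)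

theorem cast_B_eq_card_fixed {α : ℝ} (hα : Irrational α) (k : ℕ) :
    (B α k : ZMod 2) =
      #((Ico 1 k).filter fun q : ℕ => fract (q * α) < fract (k * α) ∧ k - q = q) := by
  rw [B, cast_card_eq_card_fixed_zmod_two _ (k - ·), filter_filter]
  · intro q hq
    obtain ⟨hqk, hlt⟩ := mem_filter.1 hq
    obtain ⟨hq₁, hq₂⟩ := mem_Ico.1 hqk
    refine mem_filter.2 ⟨mem_Ico.2 ⟨by omega, by omega⟩, ?_⟩
    rw [Nat.cast_sub hq₂.le, sub_mul, fract_sub_of_fract_le hlt.le]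
    linarith [hα.fract_natCast_mul_pos (n := q) (by omega)]
  · intro q hq
    have := (mem_Ico.1 (mem_filter.1 hq).1).2
    omega

theorem cast_B_of_odd {α : ℝ} (hα : Irrational α) {k : ℕ} (hk : Odd k) :
    (B α k : ZMod 2) = 0 := by
  rw [cast_B_eq_card_fixed hα, filter_false_of_mem, card_empty, Nat.cast_zero]
  rintro q - ⟨-, hq⟩
  obtain ⟨j, rfl⟩ := hk
  omega

theorem cast_B_two_mul {α : ℝ} (hα : Irrational α) {m : ℕ} (hm : m ≠ 0) :
    (B α (2 * m) : ZMod 2) = if fract ((m : ℝ) * α) < 1 / 2 then 1 else 0 := by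
  have hfixed : (Ico 1 (2 * m)).filter
      (fun q : ℕ => fract (q * α) < fract (↑(2 * m) * α) ∧ 2 * m - q = q) =
      ({m} : Finset ℕ).filter fun q : ℕ => fract (q * α) < fract (↑(2 * m) * α) := by
    ext q
    simp only [mem_filter, mem_Ico, mem_singleton]
    constructor
    · rintro ⟨-, hlt, hq⟩
      exact ⟨by omega, hlt⟩
    · rintro ⟨rfl, hlt⟩
      exact ⟨⟨by omega, by omega⟩, hlt, by omega⟩
  have hcast : ((2 * m : ℕ) : ℝ) * α = 2 * (m * α) := by push_cast; ring
  rw [cast_B_eq_card_fixed hα, hfixed, filter_singleton, hcast]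
  simp only [fract_lt_fract_two_mul_iff (hα.fract_natCast_mul_pos hm).ne']
  split_ifs <;> simp

theorem stmt_8 (α : ℝ) (hα : Irrational α) (h0 : 0 < α) (h1 : α < 1/2)
    (k : ℕ) (hk : 3 ≤ k) :
    B α k ≡ B α (k - 2) +
      (if Even k ∧ Int.fract ((k : ℝ) * α) < 2 * α then 1 else 0) [MOD 2] := by
  rw [← ZMod.natCast_eq_natCast_iff]
  push_cast
  rcases Nat.even_or_odd k with hk_even | hk_odd
  · obtain ⟨n, rfl⟩ : ∃ n, k = 2 * (n + 1) := ⟨k / 2 - 1, by grind⟩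
    have hcross : fract (((2 * (n + 1) : ℕ) : ℝ) * α) < 2 * α ↔
        (fract ((n : ℝ) * α) < 1 / 2 ↔ ¬ fract (((n + 1 : ℕ) : ℝ) * α) < 1 / 2) := by
      have h2 : ((2 * (n + 1) : ℕ) : ℝ) * α = 2 * (n * α + α) := by push_cast; ring
      have h3 : ((n + 1 : ℕ) : ℝ) * α = n * α + α := by push_cast; ring
      rw [h2, h3]
      exact fract_two_mul_add_lt_iff h0.le h1.le
    rw [show 2 * (n + 1) - 2 = 2 * n by omega, cast_B_two_mul hα n.succ_ne_zero,
      cast_B_two_mul hα (by omega : n ≠ 0),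
      if_congr ((and_iff_right hk_even).trans hcross) rfl rfl]
    split_ifs <;> first | decide | tauto
  · have hk_sub_odd : Odd (k - 2) := by obtain ⟨j, rfl⟩ := hk_odd; exact ⟨j - 1, by omega⟩
    rw [cast_B_of_odd hα hk_odd, cast_B_of_odd hα hk_sub_odd,
      if_neg fun h => Nat.not_even_iff_odd.2 hk_odd h.1]
    simp
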